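/- arXiv:2205.13863 — 3 statements merged into one kernel-verified Lean document; each statement's English description precedes it below -/
import Mathlib

section
/- Let d ≥ 1, ε > 0, and let A, B ⊆ [0,1]^d be nonempty sets that are 2ε-separated under the ℓ2 (Euclidean) norm. Then the distance-ratio classifier f*(x) = (d₂(x,B) − d₂(x,A))/(d₂(x,A) + d₂(x,B)) is Lipschitz continuous on all of ℝ^d with Lipschitz constant 1/ε with respect to the ℓ2 norm. -/
/-!
Both distance functions are 1-Lipschitz and, by the triangle inequality, their sum is at least the
separation `2ε` everywhere. For `u = d(x,A), v = d(x,B)` and `u', v'` the values at `y`, the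
difference of the ratios is `2 (v u' - u v') / ((u + v)(u' + v'))`, and
`v u' - u v' = v (u' - u) + u (v - v')` is at most `(u + v) ‖x - y‖` in absolute value; so the
difference is at most `2 ‖x - y‖ / (u' + v') ≤ ‖x - y‖ / ε`.
-/

/-- The distance-ratio classifier under the ℓ2 (Euclidean) norm. -/
noncomputable def distRatioL2 (d : ℕ) (A B : Set (EuclideanSpace ℝ (Fin d)))
    (x : EuclideanSpace ℝ (Fin d)) : ℝ :=
  (Metric.infDist x B - Metric.infDist x A) /
    (Metric.infDist x A + Metric.infDist x B)

open Metric

theorem abs_sub_div_add_sub_sub_div_add_le {a b a' b' c δ : ℝ} (ha : 0 ≤ a) (hb : 0 ≤ b)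
    (hc : 0 < c) (hab : c ≤ a + b) (hab' : c ≤ a' + b') (hδa : |a - a'| ≤ δ)
    (hδb : |b - b'| ≤ δ) :
    |(b - a) / (a + b) - (b' - a') / (a' + b')| ≤ 2 * δ / c := by
  have hS : 0 < a + b := hc.trans_le hab
  have hS' : 0 < a' + b' := hc.trans_le hab'
  have hcross : |b * a' - a * b'| ≤ (a + b) * δ := by
    rw [abs_le] at hδa hδb ⊢
    constructor <;> nlinarith [mul_le_mul_of_nonneg_left hδa.1 hb,
      mul_le_mul_of_nonneg_left hδa.2 hb, mul_le_mul_of_nonneg_left hδb.1 ha,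
      mul_le_mul_of_nonneg_left hδb.2 ha]
  have hδ : 0 ≤ δ := (abs_nonneg _).trans hδa
  calc |(b - a) / (a + b) - (b' - a') / (a' + b')|
      = 2 * |b * a' - a * b'| / ((a + b) * (a' + b')) := by
        rw [div_sub_div _ _ hS.ne' hS'.ne', abs_div, abs_of_pos (mul_pos hS hS'),
          show (b - a) * (a' + b') - (a + b) * (b' - a') = 2 * (b * a' - a * b') by ring,
          abs_mul, abs_two]
    _ ≤ 2 * ((a + b) * δ) / ((a + b) * (a' + b')) := by gcongr
    _ = 2 * δ / (a' + b') := by field_simp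
    _ ≤ 2 * δ / c := by gcongr

theorem LipschitzWith.sub_div_add {α : Type*} [PseudoMetricSpace α] {f g : α → ℝ}
    {K : NNReal} {c : ℝ} (hf : LipschitzWith K f) (hg : LipschitzWith K g) (hf0 : ∀ x, 0 ≤ f x)
    (hg0 : ∀ x, 0 ≤ g x) (hc : 0 < c) (hsum : ∀ x, c ≤ f x + g x) :
    LipschitzWith (Real.toNNReal (2 * K / c)) (fun x ↦ (g x - f x) / (f x + g x)) := by
  refine LipschitzWith.of_dist_le_mul fun x y ↦ ?_
  rw [Real.coe_toNNReal _ (by positivity), Real.dist_eq]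
  refine (abs_sub_div_add_sub_sub_div_add_le (hf0 x) (hg0 x) hc (hsum x) (hsum y)
    (hf.dist_le_mul x y) (hg.dist_le_mul x y)).trans_eq (by ring)

theorem Metric.le_infDist_add_infDist {α : Type*} [PseudoMetricSpace α] {A B : Set α} {c : ℝ}
    (hA : A.Nonempty) (hB : B.Nonempty) (hsep : ∀ a ∈ A, ∀ b ∈ B, c ≤ dist a b) (x : α) :
    c ≤ infDist x A + infDist x B := by
  suffices c - infDist x B ≤ infDist x A by linarith
  refine (le_infDist hA).2 fun a ha ↦ ?_
  suffices c - dist x a ≤ infDist x B by linarith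
  refine (le_infDist hB).2 fun b hb ↦ ?_
  linarith [hsep a ha b hb, dist_triangle_left a b x]

theorem stmt_1_general (d : ℕ) (ε : ℝ) (hε : 0 < ε)
    (A B : Set (EuclideanSpace ℝ (Fin d))) (hA : A.Nonempty) (hB : B.Nonempty)
    (hsep : ∀ a ∈ A, ∀ b ∈ B, 2 * ε ≤ ‖a - b‖) :
    LipschitzWith (Real.toNNReal (1 / ε)) (distRatioL2 d A B) := by
  have hsum := le_infDist_add_infDist hA hB (c := 2 * ε) fun a ha b hb ↦
    (hsep a ha b hb).trans_eq (dist_eq_norm a b).symm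
  have h := (lipschitz_infDist_pt A).sub_div_add (lipschitz_infDist_pt B)
    (fun _ ↦ infDist_nonneg) (fun _ ↦ infDist_nonneg) (by positivity) hsum
  rwa [show 2 * ((1 : NNReal) : ℝ) / (2 * ε) = 1 / ε by simp [field]] at h

theorem stmt_1 (d : ℕ) (hd : 1 ≤ d) (ε : ℝ) (hε : 0 < ε)
    (A B : Set (EuclideanSpace ℝ (Fin d))) (hA : A.Nonempty) (hB : B.Nonempty)
    (hAc : A ⊆ {x | ∀ i, x i ∈ Set.Icc (0 : ℝ) 1})
    (hBc : B ⊆ {x | ∀ i, x i ∈ Set.Icc (0 : ℝ) 1})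
    (hsep : ∀ a ∈ A, ∀ b ∈ B, 2 * ε ≤ ‖a - b‖) :
    LipschitzWith (Real.toNNReal (1 / ε)) (distRatioL2 d A B) :=
  stmt_1_general d ε hε A B hA hB hsep
end

section
/- Let d ≥ 1, ε > 0, c ∈ (0,1), and let A, B ⊆ [0,1]^d be nonempty sets that are 2ε-separated under the ℓ2 (Euclidean) norm, with distance-ratio classifier f*. If a function f : ℝ^d → ℝ satisfies |f(x) − f*(x)| < 1 − c for every x ∈ ℝ^d, then f robustly classifies A and B at radius cε: for every x ∈ A and every x' ∈ ℝ^d with ‖x' − x‖₂ ≤ cε one has f(x') > 0, and for every x ∈ B and every x' ∈ ℝ^d with ‖x' − x‖₂ ≤ cε one has f(x') < 0. -/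
lemma Metric.sub_le_infDist_of_forall_le_dist {X : Type*} [PseudoMetricSpace X] {s : Set X}
    {x y : X} {r δ : ℝ} (hs : s.Nonempty) (hsep : ∀ z ∈ s, r ≤ dist x z) (hxy : dist x y ≤ δ) :
    r - δ ≤ Metric.infDist y s := by
  have hx : r ≤ Metric.infDist x s := (Metric.le_infDist hs).2 hsep
  linarith [Metric.infDist_le_infDist_add_dist (x := x) (y := y) (s := s)]

lemma one_sub_le_div_of_le {u v c ε : ℝ} (hε : 0 < ε) (hc : c < 1) (hu₀ : 0 ≤ u)
    (hu : u ≤ c * ε) (hv : (2 - c) * ε ≤ v) : 1 - c ≤ (v - u) / (u + v) := by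
  have hc₀ : 0 ≤ c := nonneg_of_mul_nonneg_left (hu₀.trans hu) hε
  rw [le_div_iff₀ (by nlinarith)]
  linarith [mul_le_mul_of_nonneg_left hv hc₀,
    mul_le_mul_of_nonneg_left hu (by linarith : 0 ≤ 2 - c)]

section distRatioL2

variable {d : ℕ} {A B : Set (EuclideanSpace ℝ (Fin d))}

lemma distRatioL2_swap (x : EuclideanSpace ℝ (Fin d)) :
    distRatioL2 d B A x = -distRatioL2 d A B x := by
  unfold distRatioL2
  rw [add_comm, ← neg_div, neg_sub]

lemma one_sub_le_distRatioL2 {ε c : ℝ} {x y : EuclideanSpace ℝ (Fin d)} (hε : 0 < ε) (hc : c < 1)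
    (hB : B.Nonempty) (hx : x ∈ A) (hsep : ∀ b ∈ B, 2 * ε ≤ ‖x - b‖) (hy : ‖y - x‖ ≤ c * ε) :
    1 - c ≤ distRatioL2 d A B y := by
  have hyx : dist y x ≤ c * ε := by rwa [dist_eq_norm]
  have hdA : Metric.infDist y A ≤ c * ε := (Metric.infDist_le_dist_of_mem hx).trans hyx
  have hdB : (2 - c) * ε ≤ Metric.infDist y B := by
    have := Metric.sub_le_infDist_of_forall_le_dist hB
      (fun b hb => (dist_eq_norm x b).symm ▸ hsep b hb) (dist_comm y x ▸ hyx)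
    linarith
  exact one_sub_le_div_of_le hε hc Metric.infDist_nonneg hdA hdB

end distRatioL2

theorem stmt_5_general (d : ℕ) (ε c : ℝ) (hε : 0 < ε) (hc : c ∈ Set.Ioo (0 : ℝ) 1)
    (A B : Set (EuclideanSpace ℝ (Fin d))) (hA : A.Nonempty) (hB : B.Nonempty)
    (hsep : ∀ a ∈ A, ∀ b ∈ B, 2 * ε ≤ ‖a - b‖)
    (f : EuclideanSpace ℝ (Fin d) → ℝ)
    (happrox : ∀ x : EuclideanSpace ℝ (Fin d), |f x - distRatioL2 d A B x| < 1 - c) :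
    (∀ x ∈ A, ∀ x' : EuclideanSpace ℝ (Fin d), ‖x' - x‖ ≤ c * ε → 0 < f x') ∧
    (∀ x ∈ B, ∀ x' : EuclideanSpace ℝ (Fin d), ‖x' - x‖ ≤ c * ε → f x' < 0) := by
  refine ⟨fun x hx x' hx' => ?_, fun x hx x' hx' => ?_⟩
  · have hratio := one_sub_le_distRatioL2 hε hc.2 hB hx (hsep x hx) hx'
    linarith [(abs_lt.mp (happrox x')).1]
  · have hratio := one_sub_le_distRatioL2 hε hc.2 hA hx
      (fun a ha => norm_sub_rev x a ▸ hsep a ha x hx) hx'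
    rw [distRatioL2_swap] at hratio
    linarith [(abs_lt.mp (happrox x')).2]

theorem stmt_5 (d : ℕ) (hd : 1 ≤ d) (ε c : ℝ) (hε : 0 < ε) (hc : c ∈ Set.Ioo (0 : ℝ) 1)
    (A B : Set (EuclideanSpace ℝ (Fin d))) (hA : A.Nonempty) (hB : B.Nonempty)
    (hAc : A ⊆ {x | ∀ i, x i ∈ Set.Icc (0 : ℝ) 1})
    (hBc : B ⊆ {x | ∀ i, x i ∈ Set.Icc (0 : ℝ) 1})
    (hsep : ∀ a ∈ A, ∀ b ∈ B, 2 * ε ≤ ‖a - b‖)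
    (f : EuclideanSpace ℝ (Fin d) → ℝ)
    (happrox : ∀ x : EuclideanSpace ℝ (Fin d), |f x - distRatioL2 d A B x| < 1 - c) :
    (∀ x ∈ A, ∀ x' : EuclideanSpace ℝ (Fin d), ‖x' - x‖ ≤ c * ε → 0 < f x') ∧
    (∀ x ∈ B, ∀ x' : EuclideanSpace ℝ (Fin d), ‖x' - x‖ ≤ c * ε → f x' < 0) :=
  stmt_5_general d ε c hε hc A B hA hB hsep f happrox
end

section
/- Let S be a finite set with |S| = n, where n ≥ 2 is even, and let F be a family of real-valued functions on S. Suppose that for every labeling φ : S → {−1, 1} there exists f ∈ F with |{x ∈ S : (φ(x) = 1 and f(x) > 0) or (φ(x) = −1 and f(x) < 0)}| ≥ (9/10)·n. Then there exists a subset T ⊆ S with |T| ≥ n/20 that is sign-shattered by F. -/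
/-!
Suppose no set of size `≥ n / 20` is sign-shattered. For each labeling `S` (the set of points
labeled `1`) pick `g S ∈ F` erring on a set `E` of at most `n / 10` points. Off `E` the function
`g S` has the strict sign pattern of `S`, so any set shattered by the family
`{S \ E : S has mistake set E}` is sign-shattered by `F`; by Pajor's form of the Sauer–Shelah
lemma this family has at most `#{T : #T ≤ n / 20}` members. Since `S` is recovered from
`(E, S \ E, S ∩ E)`, this gives `2 ^ n ≤ #{E : #E ≤ n / 10} * #{T : #T ≤ n / 20} * 2 ^ (n / 10)`,
and the binomial tail bound `#{s : #s ≤ m} * x ^ (n - m) ≤ (1 + x) ^ n` with `x = 9` and `x = 19`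
makes the right-hand side smaller than `2 ^ n`.
-/

open Finset

lemma card_filter_card_le_mul_pow_le (α : Type*) [Fintype α] {m x : ℕ} (hx : 1 ≤ x) :
    #{s : Finset α | #s ≤ m} * x ^ (Fintype.card α - m) ≤ (1 + x) ^ Fintype.card α := by
  rw [← Fintype.sum_pow_mul_eq_add_pow, card_eq_sum_ones, sum_mul, sum_filter]
  gcongr with s
  split_ifs with hs
  · rw [one_mul, one_pow, one_mul]
    exact Nat.pow_le_pow_right hx (by omega)
  · exact Nat.zero_le _

lemma two_hundred_pow_mul_eighteen_pow_mul_nineteen_pow_lt {n k e : ℕ} (hn : 0 < n)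
    (hk : 10 * k ≤ n) (he : 20 * e ≤ n) :
    200 ^ n * 18 ^ k * 19 ^ e < 342 ^ n := by
  -- raising to the 20th power clears the divisions: `200 ^ 20 * 18 ^ 2 * 19 < 342 ^ 20`
  suffices (200 ^ n * 18 ^ k * 19 ^ e) ^ 20 < (342 ^ n) ^ 20 from
    lt_of_pow_lt_pow_left₀ 20 (Nat.zero_le _) this
  calc (200 ^ n * 18 ^ k * 19 ^ e) ^ 20 = 200 ^ (20 * n) * 18 ^ (20 * k) * 19 ^ (20 * e) := by
        simp only [mul_pow, ← pow_mul, mul_comm]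
    _ ≤ 200 ^ (20 * n) * 18 ^ (2 * n) * 19 ^ n := by
        gcongr 200 ^ (20 * n) * 18 ^ ?_ * 19 ^ ?_ <;> omega
    _ = (200 ^ 20 * 18 ^ 2 * 19) ^ n := by simp only [mul_pow, ← pow_mul, mul_comm]
    _ < (342 ^ 20) ^ n := Nat.pow_lt_pow_left (by norm_num) hn.ne'
    _ = (342 ^ n) ^ 20 := by rw [← pow_mul, ← pow_mul, mul_comm]

def SignShatters {α : Type*} (F : Set (α → ℝ)) (T : Finset α) : Prop :=
  ∀ T' ⊆ T, ∃ f ∈ F, (∀ x ∈ T', 0 < f x) ∧ (∀ x ∈ T, x ∉ T' → f x < 0)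

section Mistakes

variable {α : Type*} [Fintype α] [DecidableEq α]

/-- A `±1` labeling is encoded by its set `S` of positive points. -/
noncomputable def mistakes (f : α → ℝ) (S : Finset α) : Finset α :=
  {x | ¬((x ∈ S ∧ 0 < f x) ∨ (x ∉ S ∧ f x < 0))}

lemma not_mem_mistakes {f : α → ℝ} {S : Finset α} {x : α} :
    x ∉ mistakes f S ↔ (x ∈ S ∧ 0 < f x) ∨ (x ∉ S ∧ f x < 0) := by
  simp only [mistakes, mem_filter, mem_univ, true_and, not_not]

lemma ten_mul_card_mistakes_le {f : α → ℝ} {S : Finset α}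
    (h : (9 : ℝ) / 10 * Fintype.card α ≤ {x | (x ∈ S ∧ 0 < f x) ∨ (x ∉ S ∧ f x < 0)}.ncard) :
    10 * #(mistakes f S) ≤ Fintype.card α := by
  have hcorrect : {x | (x ∈ S ∧ 0 < f x) ∨ (x ∉ S ∧ f x < 0)} = ↑(mistakes f S)ᶜ := by
    ext x; simp only [Set.mem_ofPred_eq, coe_compl, Set.mem_compl_iff, mem_coe, not_mem_mistakes]
  rw [hcorrect, Set.ncard_coe_finset] at h
  have hsum : (#(mistakes f S)ᶜ + #(mistakes f S) : ℝ) = Fintype.card α := by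
    exact_mod_cast card_compl_add_card _
  exact_mod_cast (by linarith : (10 * #(mistakes f S) : ℝ) ≤ Fintype.card α)

noncomputable def correctPositives (g : Finset α → α → ℝ) (E : Finset α) : Finset (Finset α) :=
  ({S | mistakes (g S) S = E} : Finset (Finset α)).image (· \ E)

lemma signShatters_of_shatters_correctPositives {F : Set (α → ℝ)} {g : Finset α → α → ℝ}
    (hg : ∀ S, g S ∈ F) {E T : Finset α} (hT : (correctPositives g E).Shatters T) :
    SignShatters F T := by
  have hTE : ∀ x ∈ T, x ∉ E := by
    intro x hx
    obtain ⟨u, hu, hTu⟩ := hT.exists_inter_eq_singleton hx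
    obtain ⟨S, -, rfl⟩ := mem_image.1 hu
    exact (mem_sdiff.1 (mem_inter.1 (hTu ▸ mem_singleton_self x)).2).2
  intro T' hT'
  obtain ⟨u, hu, rfl⟩ := hT hT'
  obtain ⟨S, hS, rfl⟩ := mem_image.1 hu
  have hSE : mistakes (g S) S = E := (mem_filter.1 hS).2
  refine ⟨g S, hg S, fun x hx => ?_, fun x hx hxT' => ?_⟩
  · obtain ⟨hxT, hxS, hxE⟩ : x ∈ T ∧ x ∈ S ∧ x ∉ E := by simpa using hx
    have := not_mem_mistakes.1 (hSE ▸ hxE)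
    tauto
  · have hxE := hTE x hx
    have := not_mem_mistakes.1 (hSE ▸ hxE)
    have hxS : x ∉ S := fun hxS => hxT' (by simp [hx, hxS, hxE])
    tauto

lemma card_mistakes_fiber_le (g : Finset α → α → ℝ) (E : Finset α) :
    #{S | mistakes (g S) S = E} ≤ #(correctPositives g E) * 2 ^ #E := by
  rw [← card_powerset, ← card_product]
  refine card_le_card_of_injOn (fun S => (S \ E, S ∩ E)) (fun S hS => ?_) ?_
  · exact mem_product.2 ⟨mem_image_of_mem _ (mem_coe.1 hS), mem_powerset.2 inter_subset_right⟩
  · intro S _ S' _ h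
    simp only [Prod.mk.injEq] at h
    rw [← sdiff_union_inter S E, ← sdiff_union_inter S' E, h.1, h.2]

theorem two_pow_card_le_of_signShatters_card_le {F : Set (α → ℝ)} {k e : ℕ}
    (hF : ∀ S : Finset α, ∃ f ∈ F, #(mistakes f S) ≤ k)
    (hsmall : ∀ T, SignShatters F T → #T ≤ e) :
    2 ^ Fintype.card α ≤ #{E : Finset α | #E ≤ k} * (#{T : Finset α | #T ≤ e} * 2 ^ k) := by
  choose g hgF hgk using hF
  have hcorrect : ∀ E, #(correctPositives g E) ≤ #{T : Finset α | #T ≤ e} := fun E =>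
    (card_le_card_shatterer _).trans <| card_le_card fun T hT =>
      mem_filter.2 ⟨mem_univ T,
        hsmall T (signShatters_of_shatters_correctPositives hgF (mem_shatterer.1 hT))⟩
  calc 2 ^ Fintype.card α = #(univ : Finset (Finset α)) := by rw [card_univ, Fintype.card_finset]
    _ = ∑ E ∈ {E : Finset α | #E ≤ k}, #{S | mistakes (g S) S = E} :=
        card_eq_sum_card_fiberwise fun S _ => by simpa using hgk S
    _ ≤ ∑ E ∈ {E : Finset α | #E ≤ k}, #{T : Finset α | #T ≤ e} * 2 ^ k := by
        gcongr with E hE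
        exact (card_mistakes_fiber_le g E).trans <|
          Nat.mul_le_mul (hcorrect E) (Nat.pow_le_pow_right two_pos (mem_filter.1 hE).2)
    _ = _ := by rw [sum_const, smul_eq_mul]

theorem exists_signShatters_of_card_mistakes_le {F : Set (α → ℝ)} (hα : 0 < Fintype.card α)
    (hF : ∀ S : Finset α, ∃ f ∈ F, 10 * #(mistakes f S) ≤ Fintype.card α) :
    ∃ T, SignShatters F T ∧ Fintype.card α ≤ 20 * #T := by
  by_contra! hsmall
  set n := Fintype.card α
  have hcount := two_pow_card_le_of_signShatters_card_le (k := n / 10) (e := n / 20)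
    (fun S => (hF S).imp fun f ⟨hf, hS⟩ => ⟨hf, by omega⟩) fun T hT => by
      have := hsmall T hT; omega
  have hmistakes : #{E : Finset α | #E ≤ n / 10} * 9 ^ (n - n / 10) ≤ 10 ^ n :=
    card_filter_card_le_mul_pow_le α (by norm_num)
  have hshattered : #{T : Finset α | #T ≤ n / 20} * 19 ^ (n - n / 20) ≤ 20 ^ n :=
    card_filter_card_le_mul_pow_le α (by norm_num)
  have h9 : 9 ^ n = 9 ^ (n - n / 10) * 9 ^ (n / 10) := by
    rw [← pow_add, Nat.sub_add_cancel (Nat.div_le_self _ _)]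
  have h19 : 19 ^ n = 19 ^ (n - n / 20) * 19 ^ (n / 20) := by
    rw [← pow_add, Nat.sub_add_cancel (Nat.div_le_self _ _)]
  refine (two_hundred_pow_mul_eighteen_pow_mul_nineteen_pow_lt hα (Nat.mul_div_le n 10)
    (Nat.mul_div_le n 20)).not_ge ?_
  calc 342 ^ n
      = 2 ^ n * 9 ^ (n - n / 10) * 19 ^ (n - n / 20) * (9 ^ (n / 10) * 19 ^ (n / 20)) := by
        rw [show 342 = 2 * 9 * 19 by rfl, mul_pow, mul_pow, h9, h19]; ring
    _ ≤ #{E : Finset α | #E ≤ n / 10} * (#{T : Finset α | #T ≤ n / 20} * 2 ^ (n / 10)) *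
          9 ^ (n - n / 10) * 19 ^ (n - n / 20) * (9 ^ (n / 10) * 19 ^ (n / 20)) := by gcongr
    _ = (#{E : Finset α | #E ≤ n / 10} * 9 ^ (n - n / 10)) *
          (#{T : Finset α | #T ≤ n / 20} * 19 ^ (n - n / 20)) *
          ((2 * 9) ^ (n / 10) * 19 ^ (n / 20)) := by rw [mul_pow]; ring
    _ ≤ 10 ^ n * 20 ^ n * (18 ^ (n / 10) * 19 ^ (n / 20)) := by gcongr
    _ = 200 ^ n * 18 ^ (n / 10) * 19 ^ (n / 20) := by rw [← mul_pow]; ring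

end Mistakes

theorem stmt_15_general {α : Type*} [Fintype α] (n : ℕ) (hn : 2 ≤ n)
    (hcard : Fintype.card α = n) (F : Set (α → ℝ))
    (hF : ∀ φ : α → ℤ, (∀ x, φ x = 1 ∨ φ x = -1) →
      ∃ f ∈ F, (9 : ℝ) / 10 * n ≤
        ({x | (φ x = 1 ∧ 0 < f x) ∨ (φ x = -1 ∧ f x < 0)}.ncard : ℝ)) :
    ∃ T : Finset α, (n : ℝ) / 20 ≤ (T.card : ℝ) ∧
      ∀ T' ⊆ T, ∃ f ∈ F, (∀ x ∈ T', 0 < f x) ∧ (∀ x ∈ T, x ∉ T' → f x < 0) := by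
  classical
  subst hcard
  have hmistakes (S : Finset α) : ∃ f ∈ F, 10 * #(mistakes f S) ≤ Fintype.card α := by
    obtain ⟨f, hf, hcorrect⟩ := hF (fun x => if x ∈ S then 1 else -1) fun x => by
      split_ifs <;> simp
    refine ⟨f, hf, ten_mul_card_mistakes_le ?_⟩
    have hset : {x | ((if x ∈ S then 1 else -1 : ℤ) = 1 ∧ 0 < f x) ∨
        ((if x ∈ S then 1 else -1 : ℤ) = -1 ∧ f x < 0)} =
        {x | (x ∈ S ∧ 0 < f x) ∨ (x ∉ S ∧ f x < 0)} := by
      ext x; by_cases hx : x ∈ S <;> simp [hx]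
    rwa [hset] at hcorrect
  obtain ⟨T, hT, hcardT⟩ := exists_signShatters_of_card_mistakes_le (by omega) hmistakes
  exact ⟨T, by rw [div_le_iff₀ (by norm_num)]; exact_mod_cast (by omega : _ ≤ #T * 20), hT⟩

theorem stmt_15 {α : Type*} [Fintype α] (n : ℕ) (hn : 2 ≤ n) (heven : Even n)
    (hcard : Fintype.card α = n) (F : Set (α → ℝ))
    (hF : ∀ φ : α → ℤ, (∀ x, φ x = 1 ∨ φ x = -1) →
      ∃ f ∈ F, (9 : ℝ) / 10 * n ≤
        ({x | (φ x = 1 ∧ 0 < f x) ∨ (φ x = -1 ∧ f x < 0)}.ncard : ℝ)) :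
    ∃ T : Finset α, (n : ℝ) / 20 ≤ (T.card : ℝ) ∧
      ∀ T' ⊆ T, ∃ f ∈ F, (∀ x ∈ T', 0 < f x) ∧ (∀ x ∈ T, x ∉ T' → f x < 0) :=
  stmt_15_general n hn hcard F hF
end
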